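/- arXiv:2510.25127 — 2 statements merged into one kernel-verified Lean document; each statement's English description precedes it below -/
import Mathlib

section
/- Let S = (I, M, O) be a correlation scenario. For every collection M' = (M'_i)_{i∈I} of subsets M'_i ⊆ M_i, the affine dimensions of B(S), PD(S, M') and NS(S) all coincide: dim(B(S)) = dim(PD(S, M')) = dim(NS(S)). -/
open scoped Classical
open MeasureTheory

noncomputable section

/-- A correlation scenario `S = (I, M, O)`: a finite set `I` of parties, for each party `i`
a finite nonempty set `M i` of inputs, and for each input `x : M i` a finite set `O i x`
of outputs with at least two elements. -/
structure Scenario where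
  I : Type
  M : I → Type
  O : (i : I) → M i → Type
  fI : Fintype I
  fM : ∀ i, Fintype (M i)
  fO : ∀ i x, Fintype (O i x)
  hM : ∀ i, Nonempty (M i)
  hO : ∀ i x, 2 ≤ Fintype.card (O i x)

attribute [instance] Scenario.fI Scenario.fM Scenario.fO Scenario.hM

instance Scenario.instNonemptyO (S : Scenario) (i : S.I) (x : S.M i) : Nonempty (S.O i x) :=
  Fintype.card_pos_iff.mp (by have := S.hO i x; omega)

/-- Input strings of a scenario. -/
abbrev InputString (S : Scenario) := ∀ i, S.M i

/-- Output strings for a given input string. -/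
abbrev OutputString (S : Scenario) (x : InputString S) := ∀ i, S.O i (x i)

/-- The ambient real vector space with one coordinate `℘(a|x)` for each pair of an input
string `x` and an output string `a`. -/
abbrev Behaviour (S : Scenario) := (x : InputString S) → OutputString S x → ℝ

/-- `p` is a behaviour: each `p x` is a probability distribution on output strings. -/
def IsBehaviour (S : Scenario) (p : Behaviour S) : Prop :=
  (∀ x a, 0 ≤ p x a) ∧ ∀ x, ∑ a, p x a = 1

/-- The marginal `℘(a_V | x)` of a behaviour on the set `V` of parties, evaluated at the
restriction of `a` to `V`. -/
def marg (S : Scenario) (p : Behaviour S) (x : InputString S) (V : Set S.I)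
    (a : OutputString S x) : ℝ :=
  ∑ b : OutputString S x, if ∀ i ∈ V, b i = a i then p x b else 0

/-- No-signalling: replacing the input of party `i` (all other inputs fixed) leaves the
marginal on `I ∖ {i}` unchanged. -/
def NoSignalling (S : Scenario) (p : Behaviour S) : Prop :=
  ∀ (i : S.I) (x : InputString S) (m : S.M i)
    (a : OutputString S x) (a' : OutputString S (Function.update x i m)),
    (∀ j, j ≠ i → HEq (a j) (a' j)) →
    marg S p x {i}ᶜ a = marg S p (Function.update x i m) {i}ᶜ a'

/-- The set `NS(S)` of no-signalling behaviours. -/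
def NSset (S : Scenario) : Set (Behaviour S) :=
  {p | IsBehaviour S p ∧ NoSignalling S p}

/-- A behaviour is predictable if all its probabilities are `0` or `1`. -/
def Predictable (S : Scenario) (p : Behaviour S) : Prop :=
  ∀ x a, p x a = 0 ∨ p x a = 1

/-- The set `P_NS(S)` of predictable no-signalling behaviours. -/
def PNS (S : Scenario) : Set (Behaviour S) :=
  {p | IsBehaviour S p ∧ NoSignalling S p ∧ Predictable S p}

/-- The Bell-local polytope `B(S) = conv(P_NS(S))`. -/
def BellSet (S : Scenario) : Set (Behaviour S) :=
  convexHull ℝ (PNS S)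

/-- `F_x = {i : x i ∈ M' i}`, the context-dependent set of parties choosing an input in the
distinguished collection `M'`. -/
def Fup (S : Scenario) (M' : ∀ i, Set (S.M i)) (x : InputString S) : Set S.I :=
  {i | x i ∈ M' i}

/-- Partial predictability w.r.t. the collection `M'`: every marginal on a subset of `F_x`
is `{0,1}`-valued. -/
def PartPredictable (S : Scenario) (M' : ∀ i, Set (S.M i)) (p : Behaviour S) : Prop :=
  ∀ (x : InputString S) (V : Set S.I), V ⊆ Fup S M' x →
    ∀ a, marg S p x V a = 0 ∨ marg S p x V a = 1

/-- The set `PP(S, M')` of behaviours partially predictable w.r.t. `M'`. -/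
def PPset (S : Scenario) (M' : ∀ i, Set (S.M i)) : Set (Behaviour S) :=
  {p | IsBehaviour S p ∧ PartPredictable S M' p}

/-- The set `PP_NS(S, M')` of partially predictable no-signalling behaviours. -/
def PPNS (S : Scenario) (M' : ∀ i, Set (S.M i)) : Set (Behaviour S) :=
  {p | IsBehaviour S p ∧ NoSignalling S p ∧ PartPredictable S M' p}

/-- The partially deterministic polytope `PD(S, M') = conv(PP_NS(S, M'))`. -/
def PD (S : Scenario) (M' : ∀ i, Set (S.M i)) : Set (Behaviour S) :=
  convexHull ℝ (PPNS S M')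

/-- The restricted scenario `S_{|M'}`: parties `{i : M' i ≠ ∅}`, input sets `M' i`, same
output sets. -/
def Scenario.restrict (S : Scenario) (M' : ∀ i, Set (S.M i)) : Scenario where
  I := {i : S.I // (M' i).Nonempty}
  M := fun i => ↥(M' i.1)
  O := fun i x => S.O i.1 x.1
  fI := Subtype.fintype _
  fM := fun i => (Set.toFinite (M' i.1)).fintype
  fO := fun i x => S.fO i.1 x.1
  hM := fun i => i.2.to_subtype
  hO := fun i x => S.hO i.1 x.1

/-- A bipartition `(S_{|M'}, S_{|M'^⊥})` is nonredundant unless `M'` is everything or nothing. -/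
def Nonredundant (S : Scenario) (M' : ∀ i, Set (S.M i)) : Prop :=
  ¬ (∀ i, M' i = Set.univ) ∧ ¬ (∀ i, M' i = (∅ : Set (S.M i)))

/-- Extension of an input string of `S` to an input string of the restricted scenario
`S_{|M'}` (choosing arbitrary inputs for the parties `i` with `x i ∉ M' i`). -/
def extendInput (S : Scenario) (M' : ∀ i, Set (S.M i)) (x : InputString S) :
    InputString (S.restrict M') :=
  fun i => if h : x i.1 ∈ M' i.1 then ⟨x i.1, h⟩ else ⟨i.2.some, i.2.some_mem⟩

/-- Extension of an output string of `S` to an output string of the restricted scenario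
`S_{|M'}` at the extended input string. -/
def extendOutput (S : Scenario) (M' : ∀ i, Set (S.M i)) (x : InputString S)
    (a : OutputString S x) : OutputString (S.restrict M') (extendInput S M' x) :=
  fun i =>
    if h : x i.1 ∈ M' i.1 then
      cast (congrArg (S.O i.1)
        (show x i.1 = (extendInput S M' x i).1 by first | simp [extendInput, h] | (unfold extendInput; split <;> simp_all)))
        (a i.1)
    else Classical.arbitrary _

/-- The behaviour product `℘' ⊙ ℘'^⊥` of behaviours on the two halves `S' = S_{|M'}` and
`S'^⊥ = S_{|M'^⊥}` of a disjoint bipartition of `S`: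
`(℘'⊙℘'^⊥)(a|x) = ℘'(a_{F_x}|x_{F_x}) · ℘'^⊥(a_{I∖F_x}|x_{I∖F_x})`, the factors being the
corresponding marginals (well defined for no-signalling behaviours). -/
def bprod (S : Scenario) (M' : ∀ i, Set (S.M i))
    (p' : Behaviour (S.restrict M'))
    (p'' : Behaviour (S.restrict fun i => (M' i)ᶜ)) :
    Behaviour S :=
  fun x a =>
    marg (S.restrict M') p' (extendInput S M' x)
        {i : (S.restrict M').I | x i.1 ∈ M' i.1} (extendOutput S M' x a) *
    marg (S.restrict fun i => (M' i)ᶜ) p'' (extendInput S (fun i => (M' i)ᶜ) x)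
        {i : (S.restrict fun i => (M' i)ᶜ).I | x i.1 ∈ (M' i.1)ᶜ}
        (extendOutput S (fun i => (M' i)ᶜ) x a)

/-- The product `K' ⊙ K''` of two sets of behaviours on the halves of a bipartition. -/
def bprodSet (S : Scenario) (M' : ∀ i, Set (S.M i))
    (K' : Set (Behaviour (S.restrict M')))
    (K'' : Set (Behaviour (S.restrict fun i => (M' i)ᶜ))) :
    Set (Behaviour S) :=
  Set.image2 (bprod S M') K' K''

end

noncomputable section

namespace PDProof

variable {S : Scenario}

abbrev TT (S : Scenario) (i : S.I) := Σ x : S.M i, S.O i x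

abbrev Strat (S : Scenario) := ∀ i, (x : S.M i) → S.O i x

instance (i : S.I) : Nonempty (TT S i) := by
  obtain ⟨x⟩ := S.hM i
  exact ⟨⟨x, Classical.arbitrary _⟩⟩

def Det (S : Scenario) (g : Strat S) : Behaviour S :=
  fun x a => ∏ i, if g i (x i) = a i then (1:ℝ) else 0

lemma p_congr (p : Behaviour S) {x x' : InputString S} (hx : x = x')
    {a : OutputString S x} {a' : OutputString S x'} (ha : ∀ i, HEq (a i) (a' i)) :
    p x a = p x' a' := by
  subst hx
  have : a = a' := funext fun i => eq_of_heq (ha i)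
  rw [this]

lemma snd_heq {i : S.I} {u w : TT S i} (h : u = w) : HEq u.2 w.2 := by
  subst h; rfl

lemma marg_compl_singleton (p : Behaviour S) (x : InputString S) (j : S.I)
    (a : OutputString S x) :
    marg S p x ({j}ᶜ : Set S.I) a = ∑ c : S.O j (x j), p x (Function.update a j c) := by
  unfold marg
  have step1 : ∀ c : S.O j (x j), p x (Function.update a j c)
      = ∑ b : OutputString S x, if b = Function.update a j c then p x b else 0 :=
    fun c => by simp
  rw [Finset.sum_congr rfl fun c (_ : c ∈ Finset.univ) => step1 c, Finset.sum_comm]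
  refine Finset.sum_congr rfl fun b _ => ?_
  by_cases h : ∀ i ∈ ({j}ᶜ : Set S.I), b i = a i
  · rw [if_pos h]
    have hb : ∀ c : S.O j (x j), (b = Function.update a j c) ↔ (c = b j) := by
      intro c
      constructor
      · intro hc; rw [hc]; simp
      · intro hc
        funext i
        by_cases hi : i = j
        · subst hi; simp [hc]
        · rw [Function.update_of_ne hi]
          exact h i (by simp [hi])
    rw [Finset.sum_congr rfl fun c (_ : c ∈ Finset.univ) => if_congr (hb c) rfl rfl]
    simp
  · rw [if_neg h]
    push_neg at h
    obtain ⟨i, hi, hbi⟩ := h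
    have hij : i ≠ j := by simpa using hi
    refine (Finset.sum_eq_zero fun c _ => ?_).symm
    rw [if_neg]
    intro hc
    exact hbi (by rw [hc, Function.update_of_ne hij])

def PT (p : Behaviour S) : (∀ i, TT S i) → ℝ :=
  fun t => p (fun i => (t i).1) (fun i => (t i).2)

lemma nsT (p : Behaviour S) (hns : NoSignalling S p) (t : ∀ i, TT S i) (j : S.I)
    (x' : S.M j) :
    ∑ c : S.O j (t j).1, PT p (Function.update t j ⟨(t j).1, c⟩)
      = ∑ c : S.O j x', PT p (Function.update t j ⟨x', c⟩) := by
  set x : InputString S := fun i => (t i).1 with hxdef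
  set a : OutputString S x := fun i => (t i).2 with hadef
  have ht1 : ∀ i, x i = (t i).1 := fun i => rfl
  set a' : OutputString S (Function.update x j x') := fun i =>
    if h : i = j then
      cast (by subst h; rw [Function.update_self]) (Classical.arbitrary (S.O j x'))
    else cast (by rw [Function.update_of_ne h]) ((t i).2) with ha'def
  have hcomp : ∀ i, i ≠ j → HEq (a i) (a' i) := by
    intro i hi
    rw [ha'def]
    simp only [dif_neg hi]
    exact (cast_heq _ _).symm
  have H := hns j x x' a a' hcomp
  rw [marg_compl_singleton, marg_compl_singleton] at H
  have hL : ∑ c : S.O j (x j), p x (Function.update a j c)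
      = ∑ c : S.O j (t j).1, PT p (Function.update t j ⟨(t j).1, c⟩) := by
    refine Finset.sum_congr rfl fun c _ => ?_
    refine p_congr p ?_ ?_
    · funext i
      by_cases hi : i = j
      · subst hi; simp [hxdef]
      · simp [Function.update_of_ne hi, hxdef]
    · intro i
      by_cases hi : i = j
      · subst hi
        have h1 : Function.update a i c i = c := Function.update_self _ _ _
        rw [h1]
        exact HEq.symm (snd_heq (Function.update_self _ _ _))
      · have h1 : Function.update a j c i = a i := Function.update_of_ne hi _ _
        rw [h1]
        exact (snd_heq (Function.update_of_ne hi _ _)).symm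
  have e : S.O j (Function.update x j x' j) = S.O j x' := by rw [Function.update_self]
  have hR : ∑ c : S.O j (Function.update x j x' j),
        p (Function.update x j x') (Function.update a' j c)
      = ∑ c : S.O j x', PT p (Function.update t j ⟨x', c⟩) := by
    refine Fintype.sum_equiv (Equiv.cast e) _ _ fun c => ?_
    refine p_congr p ?_ ?_
    · funext i
      by_cases hi : i = j
      · subst hi; simp
      · simp [Function.update_of_ne hi, hxdef]
    · intro i
      by_cases hi : i = j
      · subst hi
        have h1 : Function.update a' i c i = c := Function.update_self _ _ _
        rw [h1]
        simp only [Equiv.cast_apply]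
        exact HEq.trans (cast_heq e c).symm
          (snd_heq (u := (⟨x', cast e c⟩ : TT S i)) (Function.update_self i ⟨x', cast e c⟩ t).symm)
      · have h1 : Function.update a' j c i = a' i := Function.update_of_ne hi _ _
        rw [h1]
        have h2 : HEq (a' i) ((t i).2) := by
          rw [ha'def]
          simp only [dif_neg hi]
          exact cast_heq _ _
        exact HEq.trans h2 (snd_heq (Function.update_of_ne hi _ _).symm)
  rw [← hL, ← hR]
  exact H
def mrg (s : Finset S.I) (τ t : ∀ i, TT S i) : ∀ i, TT S i :=
  fun i => if i ∈ s then τ i else t i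

def SliceT (p : Behaviour S) (s : Finset S.I) (τ : ∀ i, TT S i) (g : Strat S) :
    (∀ i, TT S i) → ℝ :=
  fun t => (∏ i ∈ s, if g i (t i).1 = (t i).2 then (1:ℝ) else 0) * PT p (mrg s τ t)

lemma mrg_empty (τ t : ∀ i, TT S i) : mrg (∅ : Finset S.I) τ t = t := by
  funext i; simp [mrg]

lemma sliceT_empty (p : Behaviour S) (τ : ∀ i, TT S i) (g : Strat S) :
    SliceT p ∅ τ g = PT p := by
  funext t; simp [SliceT, mrg_empty]

lemma sliceT_step (p : Behaviour S) (hns : NoSignalling S p) {j : S.I} {s : Finset S.I}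
    (hj : j ∉ s) (τ : ∀ i, TT S i) (g : Strat S) :
    SliceT p s τ g
      = (∑ x : S.M j, ∑ a : S.O j x,
          (SliceT p (insert j s) (Function.update τ j ⟨x, a⟩)
              (Function.update g j (Function.update (g j) x a))
            - SliceT p (insert j s) (Function.update τ j ⟨x, a⟩) g))
        + ∑ a : S.O j (Classical.arbitrary (S.M j)),
            SliceT p (insert j s) (Function.update τ j ⟨Classical.arbitrary (S.M j), a⟩) g := by
  funext t
  have hmerge : ∀ v : TT S j,
      mrg (insert j s) (Function.update τ j v) t = Function.update (mrg s τ t) j v := by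
    intro v; funext i
    by_cases hij : i = j
    · subst hij; simp [mrg]
    · by_cases his : i ∈ s <;>
        simp [mrg, Function.update_of_ne hij, Finset.mem_insert, hij, his]
  have hslice : ∀ (v : TT S j) (g' : Strat S), (∀ i ∈ s, g' i = g i) →
      SliceT p (insert j s) (Function.update τ j v) g' t
        = (if g' j (t j).1 = (t j).2 then (1:ℝ) else 0)
            * ((∏ i ∈ s, if g i (t i).1 = (t i).2 then (1:ℝ) else 0)
                * PT p (Function.update (mrg s τ t) j v)) := by
    intro v g' h
    show (∏ i ∈ insert j s, if g' i (t i).1 = (t i).2 then (1:ℝ) else 0) * _ = _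
    rw [hmerge v, Finset.prod_insert hj, mul_assoc]
    congr 2
    exact Finset.prod_congr rfl fun i hi => by rw [h i hi]
  have hg1 : ∀ (x : S.M j) (a : S.O j x), ∀ i ∈ s,
      Function.update g j (Function.update (g j) x a) i = g i := by
    intro x a i hi
    have : i ≠ j := fun h => hj (h ▸ hi)
    exact Function.update_of_ne this _ _
  have key : ∀ (x : S.M j) (a : S.O j x),
      SliceT p (insert j s) (Function.update τ j ⟨x, a⟩)
          (Function.update g j (Function.update (g j) x a)) t
        = (if Function.update (g j) x a (t j).1 = (t j).2 then (1:ℝ) else 0)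
            * ((∏ i ∈ s, if g i (t i).1 = (t i).2 then (1:ℝ) else 0)
                * PT p (Function.update (mrg s τ t) j ⟨x, a⟩)) := by
    intro x a
    rw [hslice ⟨x, a⟩ _ (hg1 x a), Function.update_self]
  have key2 : ∀ (x : S.M j) (a : S.O j x),
      SliceT p (insert j s) (Function.update τ j ⟨x, a⟩) g t
        = (if g j (t j).1 = (t j).2 then (1:ℝ) else 0)
            * ((∏ i ∈ s, if g i (t i).1 = (t i).2 then (1:ℝ) else 0)
                * PT p (Function.update (mrg s τ t) j ⟨x, a⟩)) :=
    fun x a => hslice ⟨x, a⟩ g fun _ _ => rfl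
  have hLHS : SliceT p s τ g t
      = (∏ i ∈ s, if g i (t i).1 = (t i).2 then (1:ℝ) else 0) * PT p (mrg s τ t) := rfl
  simp only [Pi.add_apply, Finset.sum_apply, Pi.sub_apply, key, key2, hLHS]
  -- abbreviations
  have hns2 : ∑ a : S.O j (Classical.arbitrary (S.M j)),
        PT p (Function.update (mrg s τ t) j ⟨Classical.arbitrary (S.M j), a⟩)
      = ∑ a : S.O j (t j).1, PT p (Function.update (mrg s τ t) j ⟨(t j).1, a⟩) := by
    have h1 := nsT p hns (mrg s τ t) j (Classical.arbitrary (S.M j))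
    have h2 := nsT p hns (mrg s τ t) j (t j).1
    have hmj : (mrg s τ t j).1 = (t j).1 := by simp [mrg, hj]
    exact h1.symm.trans h2
  set m := mrg s τ t with hm
  set C := ∏ i ∈ s, if g i (t i).fst = (t i).snd then (1:ℝ) else 0 with hC
  set E := if g j (t j).fst = (t j).snd then (1:ℝ) else 0 with hE
  have hsplit := Finset.add_sum_erase (Finset.univ : Finset (S.M j))
      (fun x => ∑ a : S.O j x,
        ((if Function.update (g j) x a (t j).1 = (t j).2 then (1:ℝ) else 0)
            * (C * PT p (Function.update m j ⟨x, a⟩))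
          - E * (C * PT p (Function.update m j ⟨x, a⟩)))) (Finset.mem_univ (t j).1)
  rw [← hsplit]
  have herase : ∑ x ∈ Finset.univ.erase (t j).1, ∑ a : S.O j x,
        ((if Function.update (g j) x a (t j).1 = (t j).2 then (1:ℝ) else 0)
            * (C * PT p (Function.update m j ⟨x, a⟩))
          - E * (C * PT p (Function.update m j ⟨x, a⟩))) = 0 := by
    refine Finset.sum_eq_zero fun x hx => Finset.sum_eq_zero fun a _ => ?_
    have hne : (t j).1 ≠ x := (Finset.mem_erase.mp hx).1.symm
    rw [Function.update_of_ne hne, ← hE, sub_self]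
  rw [herase]
  have hone : ∑ a : S.O j (t j).1,
        ((if Function.update (g j) (t j).1 a (t j).1 = (t j).2 then (1:ℝ) else 0)
            * (C * PT p (Function.update m j ⟨(t j).1, a⟩))
          - E * (C * PT p (Function.update m j ⟨(t j).1, a⟩)))
      = C * PT p m - E * (C * ∑ a : S.O j (t j).1, PT p (Function.update m j ⟨(t j).1, a⟩)) := by
    rw [Finset.sum_sub_distrib]
    congr 1
    · have h1 : ∀ a : S.O j (t j).1,
          (if Function.update (g j) (t j).1 a (t j).1 = (t j).2 then (1:ℝ) else 0)
              * (C * PT p (Function.update m j ⟨(t j).1, a⟩))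
            = if a = (t j).2 then C * PT p (Function.update m j ⟨(t j).1, a⟩) else 0 := by
        intro a
        rw [Function.update_self, ite_mul, one_mul, zero_mul]
      rw [Finset.sum_congr rfl fun a _ => h1 a]
      rw [Finset.sum_ite_eq' Finset.univ ((t j).2)
        (fun a => C * PT p (Function.update m j ⟨(t j).1, a⟩))]
      have heta : (⟨(t j).1, (t j).2⟩ : TT S j) = t j := rfl
      have hmj : t j = m j := by rw [hm]; simp [mrg, hj]
      rw [if_pos (Finset.mem_univ _), heta, hmj, Function.update_eq_self]
    · rw [← Finset.mul_sum, ← Finset.mul_sum]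
  beta_reduce
  rw [hone]
  have hlast : ∑ a : S.O j (Classical.arbitrary (S.M j)),
        E * (C * PT p (Function.update m j ⟨Classical.arbitrary (S.M j), a⟩))
      = E * (C * ∑ a : S.O j (t j).1, PT p (Function.update m j ⟨(t j).1, a⟩)) := by
    rw [← Finset.mul_sum, ← Finset.mul_sum, hns2]
  rw [hlast]
  ring
def DetT (S : Scenario) (g : Strat S) : (∀ i, TT S i) → ℝ :=
  fun t => ∏ i, if g i (t i).1 = (t i).2 then (1:ℝ) else 0

def SliceSet (p : Behaviour S) (s : Finset S.I) : Set ((∀ i, TT S i) → ℝ) :=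
  {f | ∃ τ g, f = SliceT p s τ g}

lemma mem_span_sliceSet (p : Behaviour S) (hns : NoSignalling S p) (s : Finset S.I) :
    PT p ∈ Submodule.span ℝ (SliceSet p s) := by
  classical
  induction s using Finset.induction_on with
  | empty =>
      refine Submodule.subset_span ?_
      exact ⟨Classical.arbitrary _, Classical.arbitrary _, (sliceT_empty p _ _).symm⟩
  | insert j s hj ih =>
      refine Submodule.span_le.mpr ?_ ih
      rintro f ⟨τ, g, rfl⟩
      rw [sliceT_step p hns hj τ g]
      refine Submodule.add_mem _ ?_ ?_
      · refine Submodule.sum_mem _ fun x _ => ?_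
        refine Submodule.sum_mem _ fun a _ => ?_
        exact Submodule.sub_mem _ (Submodule.subset_span ⟨_, _, rfl⟩)
          (Submodule.subset_span ⟨_, _, rfl⟩)
      · exact Submodule.sum_mem _ fun a _ => Submodule.subset_span ⟨_, _, rfl⟩

lemma pt_mem_span_detT (p : Behaviour S) (hns : NoSignalling S p) :
    PT p ∈ Submodule.span ℝ (Set.range (DetT S)) := by
  have h := mem_span_sliceSet p hns Finset.univ
  refine Submodule.span_le.mpr ?_ h
  rintro f ⟨τ, g, rfl⟩
  have hEq : SliceT p Finset.univ τ g = PT p τ • DetT S g := by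
    funext t
    show (∏ i, if g i (t i).1 = (t i).2 then (1:ℝ) else 0) * PT p (mrg Finset.univ τ t) = _
    have hm : mrg Finset.univ τ t = τ := by funext i; simp [mrg]
    rw [hm]
    simp [DetT, mul_comm]
  rw [hEq]
  exact Submodule.smul_mem _ _ (Submodule.subset_span ⟨g, rfl⟩)

lemma det_apply (g : Strat S) (x : InputString S) (a : OutputString S x) :
    Det S g x a = if (∀ i, g i (x i) = a i) then 1 else 0 := by
  unfold Det
  rw [Fintype.prod_boole]

lemma det_nonneg (g : Strat S) (x : InputString S) (a : OutputString S x) :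
    0 ≤ Det S g x a := by
  rw [det_apply]
  split <;> norm_num

lemma det_sum_one (g : Strat S) (x : InputString S) :
    ∑ a : OutputString S x, Det S g x a = 1 := by
  have h : ∀ a : OutputString S x,
      Det S g x a = if (fun i => g i (x i)) = a then 1 else 0 := by
    intro a
    rw [det_apply]
    exact if_congr funext_iff.symm rfl rfl
  rw [Finset.sum_congr rfl fun a _ => h a]
  simp

lemma det_pred (g : Strat S) : Predictable S (Det S g) := by
  intro x a
  rw [det_apply]
  by_cases h : ∀ i, g i (x i) = a i
  · right; rw [if_pos h]
  · left; rw [if_neg h]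

lemma ite_congr_dep {i : S.I} (g : Strat S) {x1 x2 : S.M i} (h : x1 = x2)
    {a1 : S.O i x1} {a2 : S.O i x2} (ha : HEq a1 a2) :
    (if g i x1 = a1 then (1:ℝ) else 0) = if g i x2 = a2 then 1 else 0 := by
  subst h
  rw [eq_of_heq ha]

lemma det_marg (g : Strat S) (x : InputString S) (j : S.I) (a : OutputString S x) :
    marg S (Det S g) x ({j}ᶜ : Set S.I) a
      = ∏ i ∈ Finset.univ.erase j, (if g i (x i) = a i then (1:ℝ) else 0) := by
  rw [marg_compl_singleton]
  have h : ∀ c : S.O j (x j),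
      Det S g x (Function.update a j c)
        = (if g j (x j) = c then (1:ℝ) else 0)
            * ∏ i ∈ Finset.univ.erase j, (if g i (x i) = a i then (1:ℝ) else 0) := by
    intro c
    unfold Det
    rw [← Finset.mul_prod_erase Finset.univ _ (Finset.mem_univ j), Function.update_self]
    congr 1
    refine Finset.prod_congr rfl fun i hi => ?_
    rw [Function.update_of_ne (Finset.mem_erase.mp hi).1]
  rw [Finset.sum_congr rfl fun c _ => h c, ← Finset.sum_mul]
  simp

lemma det_ns (g : Strat S) : NoSignalling S (Det S g) := by
  intro j x m a a' hcomp
  rw [det_marg, det_marg]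
  refine Finset.prod_congr rfl fun i hi => ?_
  have hij : i ≠ j := (Finset.mem_erase.mp hi).1
  exact ite_congr_dep g (Function.update_of_ne hij m x).symm (hcomp i hij)

lemma det_mem_PNS (g : Strat S) : Det S g ∈ PNS S :=
  ⟨⟨det_nonneg g, det_sum_one g⟩, det_ns g, det_pred g⟩

lemma ns_mem_affineSpan_pns (p : Behaviour S) (hp : p ∈ NSset S) :
    p ∈ affineSpan ℝ (PNS S) := by
  obtain ⟨hb, hns⟩ := hp
  have h1 : PT p ∈ Submodule.span ℝ (Set.range (DetT S)) := pt_mem_span_detT p hns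
  rw [Submodule.mem_span_range_iff_exists_fun] at h1
  obtain ⟨c, hc⟩ := h1
  have hpt : ∀ (x : InputString S) (a : OutputString S x),
      p x a = ∑ g : Strat S, c g * Det S g x a := by
    intro x a
    have h2 := congrFun hc (fun i => ⟨x i, a i⟩)
    simp only [Finset.sum_apply, Pi.smul_apply, smul_eq_mul] at h2
    exact h2.symm
  have hc1 : ∑ g : Strat S, c g = 1 := by
    have x0 : InputString S := fun i => Classical.arbitrary _
    have h2 : ∑ a : OutputString S x0, p x0 a = 1 := hb.2 x0
    rw [Finset.sum_congr rfl fun a _ => hpt x0 a, Finset.sum_comm] at h2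
    rw [Finset.sum_congr rfl fun g (_ : g ∈ Finset.univ) =>
      (by rw [← Finset.mul_sum, det_sum_one g x0, mul_one] :
        ∑ a : OutputString S x0, c g * Det S g x0 a = c g)] at h2
    exact h2
  have hcomb : Finset.univ.affineCombination ℝ (fun g : Strat S => Det S g) c = p := by
    rw [Finset.affineCombination_eq_linear_combination _ _ _ hc1]
    funext x a
    rw [Finset.sum_apply, Finset.sum_apply]
    simp only [Pi.smul_apply, smul_eq_mul]
    exact (hpt x a).symm
  have hmem := affineCombination_mem_affineSpan hc1 (fun g : Strat S => Det S g)
  rw [hcomb] at hmem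
  have hsub : Set.range (fun g : Strat S => Det S g) ⊆ PNS S := by
    rintro f ⟨g, rfl⟩
    exact det_mem_PNS g
  exact affineSpan_mono ℝ hsub hmem
lemma predictable_marg (p : Behaviour S) (hb : IsBehaviour S p) (hpred : Predictable S p)
    (x : InputString S) (V : Set S.I) (a : OutputString S x) :
    marg S p x V a = 0 ∨ marg S p x V a = 1 := by
  obtain ⟨b₀, hb₀⟩ : ∃ b₀ : OutputString S x, p x b₀ = 1 := by
    by_contra h
    push_neg at h
    have hz : ∀ b : OutputString S x, p x b = 0 := fun b => (hpred x b).resolve_right (h b)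
    have h2 := hb.2 x
    rw [Finset.sum_eq_zero fun b _ => hz b] at h2
    norm_num at h2
  have h0 : ∀ b : OutputString S x, b ≠ b₀ → p x b = 0 := by
    intro b hbne
    rcases hpred x b with h | h
    · exact h
    · exfalso
      have hle : ∑ b' ∈ ({b, b₀} : Finset (OutputString S x)), p x b' ≤ ∑ b', p x b' :=
        Finset.sum_le_sum_of_subset_of_nonneg (Finset.subset_univ _)
          (fun i _ _ => hb.1 x i)
      rw [Finset.sum_pair hbne, hb.2 x, h, hb₀] at hle
      norm_num at hle
  unfold marg
  rw [Finset.sum_eq_single b₀]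
  · by_cases hcond : ∀ i ∈ V, b₀ i = a i
    · right; rw [if_pos hcond, hb₀]
    · left; rw [if_neg hcond]
  · intro b _ hbne
    rw [h0 b hbne]
    exact ite_self 0
  · intro h; exact absurd (Finset.mem_univ b₀) h

lemma pns_subset_ppns (M' : ∀ i, Set (S.M i)) : PNS S ⊆ PPNS S M' := by
  rintro p ⟨h1, h2, h3⟩
  exact ⟨h1, h2, fun x V _ a => predictable_marg p h1 h3 x V a⟩

lemma ppns_subset_ns (M' : ∀ i, Set (S.M i)) : PPNS S M' ⊆ NSset S :=
  fun p hp => ⟨hp.1, hp.2.1⟩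

end PDProof

/-- For every collection `M'` of subsets of inputs, the affine dimensions of `B(S)`,
`PD(S, M')` and `NS(S)` all coincide. -/
theorem pd_affine_dim (S : Scenario) [Nonempty S.I] (M' : ∀ i, Set (S.M i)) :
    Module.finrank ℝ (affineSpan ℝ (BellSet S)).direction =
      Module.finrank ℝ (affineSpan ℝ (PD S M')).direction ∧
    Module.finrank ℝ (affineSpan ℝ (PD S M')).direction =
      Module.finrank ℝ (affineSpan ℝ (NSset S)).direction := by
  have hB : affineSpan ℝ (BellSet S) = affineSpan ℝ (PNS S) := by
    unfold BellSet
    exact affineSpan_convexHull (PNS S)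
  have hP : affineSpan ℝ (PD S M') = affineSpan ℝ (PPNS S M') := by
    unfold PD
    exact affineSpan_convexHull (PPNS S M')
  have h1 : affineSpan ℝ (PNS S) ≤ affineSpan ℝ (PPNS S M') :=
    affineSpan_mono ℝ (PDProof.pns_subset_ppns M')
  have h2 : affineSpan ℝ (PPNS S M') ≤ affineSpan ℝ (NSset S) :=
    affineSpan_mono ℝ (PDProof.ppns_subset_ns M')
  have h3 : affineSpan ℝ (NSset S) ≤ affineSpan ℝ (PNS S) :=
    affineSpan_le.mpr fun p hp => PDProof.ns_mem_affineSpan_pns p hp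
  have e1 : affineSpan ℝ (PNS S) = affineSpan ℝ (PPNS S M') := le_antisymm h1 (h2.trans h3)
  have e2 : affineSpan ℝ (PPNS S M') = affineSpan ℝ (NSset S) := le_antisymm h2 (h3.trans h1)
  constructor
  · rw [hB, hP, e1]
  · rw [hP, e2]


end
end

section
/- Let S = (I, M, O) be a correlation scenario and let (S', S'^⊥) be any disjoint bipartition of S. Then conv( B(S') ⊙ B(S'^⊥) ) = B(S). -/
open scoped Classical
open MeasureTheory

noncomputable section

namespace BellAux

universe u_heq
lemma heq_eq_iff {A B : Sort u_heq} {u v : A} {u' v' : B} (h1 : HEq u u') (h2 : HEq v v') :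
    (u = v) ↔ (u' = v') := by cases h1; cases h2; exact Iff.rfl

/-- A local deterministic strategy. -/
def Strat (S : Scenario) := ∀ i (m : S.M i), S.O i m

/-- The deterministic behaviour associated with a strategy. -/
def detB (S : Scenario) (o : Strat S) : Behaviour S :=
  fun x a => if ∀ i, a i = o i (x i) then 1 else 0

lemma marg_point (S : Scenario) (p : Behaviour S) (x : InputString S) (c : OutputString S x)
    (h : ∀ b, p x b = if b = c then 1 else 0) (V : Set S.I) (a : OutputString S x) :
    marg S p x V a = if ∀ i ∈ V, c i = a i then 1 else 0 := by
  unfold marg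
  calc ∑ b : OutputString S x, (if ∀ i ∈ V, b i = a i then p x b else 0)
      = ∑ b : OutputString S x, (if b = c then (if ∀ i ∈ V, c i = a i then (1:ℝ) else 0) else 0) := by
        refine Finset.sum_congr rfl fun b _ => ?_
        rw [h b]
        by_cases hbc : b = c
        · subst hbc; simp
        · simp [hbc]
    _ = if ∀ i ∈ V, c i = a i then 1 else 0 := by
        rw [Finset.sum_ite_eq' Finset.univ c fun _ => (if ∀ i ∈ V, c i = a i then (1:ℝ) else 0)]
        simp

lemma detB_point (S : Scenario) (o : Strat S) (x : InputString S) (b : OutputString S x) :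
    detB S o x b = if b = (fun i => o i (x i)) then 1 else 0 := by
  unfold detB
  by_cases h : b = fun i => o i (x i)
  · simp [h]
  · rw [if_neg h, if_neg (mt funext h)]

lemma marg_detB (S : Scenario) (o : Strat S) (x : InputString S) (V : Set S.I)
    (a : OutputString S x) :
    marg S (detB S o) x V a = if ∀ i ∈ V, o i (x i) = a i then 1 else 0 :=
  marg_point S _ x _ (detB_point S o x) V a

lemma detB_mem_PNS (S : Scenario) (o : Strat S) : detB S o ∈ PNS S := by
  refine ⟨⟨fun x a => ?_, fun x => ?_⟩, ?_, fun x a => ?_⟩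
  · unfold detB; split <;> norm_num
  · calc ∑ a, detB S o x a = ∑ a : OutputString S x,
        (if a = (fun i => o i (x i)) then (1:ℝ) else 0) :=
          Finset.sum_congr rfl fun a _ => detB_point S o x a
      _ = 1 := by
          rw [Finset.sum_ite_eq' Finset.univ (fun i => o i (x i)) fun _ => (1:ℝ)]; simp
  · intro i x m a a' hh
    rw [marg_detB, marg_detB]
    have hiff : (∀ j ∈ ({i}ᶜ : Set S.I), o j (x j) = a j) ↔
        (∀ j ∈ ({i}ᶜ : Set S.I), o j (Function.update x i m j) = a' j) := by
      simp only [Set.mem_compl_iff, Set.mem_singleton_iff]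
      have key : ∀ j, j ≠ i → ((o j (x j) = a j) ↔ (o j (Function.update x i m j) = a' j)) := by
        intro j hj
        have h1 : HEq (o j (x j)) (o j (Function.update x i m j)) := by
          rw [Function.update_of_ne hj m x]
        exact heq_eq_iff h1 (hh j hj)
      exact ⟨fun h j hj => (key j hj).mp (h j hj), fun h j hj => (key j hj).mpr (h j hj)⟩
    by_cases hC : ∀ j ∈ ({i}ᶜ : Set S.I), o j (x j) = a j
    · rw [if_pos hC, if_pos (hiff.mp hC)]
    · rw [if_neg hC, if_neg fun hc => hC (hiff.mpr hc)]
  · unfold detB; split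
    · right; rfl
    · left; rfl

lemma exists_point (S : Scenario) (p : Behaviour S) (hp : p ∈ PNS S) (x : InputString S) :
    ∃ c : OutputString S x, ∀ b, p x b = if b = c then 1 else 0 := by
  obtain ⟨⟨hnn, hsum⟩, _, hpred⟩ := hp
  have hex : ∃ c, p x c = 1 := by
    by_contra h
    push_neg at h
    have hz : ∀ b, p x b = 0 := fun b => (hpred x b).resolve_right (h b)
    have := hsum x
    rw [Finset.sum_congr rfl fun b _ => hz b] at this
    simp at this
  obtain ⟨c, hc⟩ := hex
  refine ⟨c, fun b => ?_⟩
  by_cases hbc : b = c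
  · subst hbc; simp [hc]
  · rw [if_neg hbc]
    rcases hpred x b with h0 | h1
    · exact h0
    · exfalso
      have hle : p x b + p x c ≤ ∑ a, p x a := by
        have h2 : ∑ a ∈ ({b, c} : Finset (OutputString S x)), p x a = p x b + p x c :=
          Finset.sum_pair hbc
        rw [← h2]
        exact Finset.sum_le_sum_of_subset_of_nonneg (Finset.subset_univ _)
          (fun a _ _ => hnn x a)
      rw [hsum x, h1, hc] at hle
      norm_num at hle

lemma step (S : Scenario) (p : Behaviour S) (hp : p ∈ PNS S)
    (α : ∀ x, OutputString S x) (hα : ∀ x b, p x b = if b = α x then 1 else 0)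
    (j : S.I) (x : InputString S) (m : S.M j) (i : S.I) (hij : i ≠ j) :
    HEq (α x i) (α (Function.update x j m) i) := by
  have ha'e : ∀ k, k ≠ j → Function.update x j m k = x k := fun k hk =>
    Function.update_of_ne hk m x
  set x' := Function.update x j m with hx'
  let a' : OutputString S x' := fun k =>
    if h : k = j then α x' k else cast (congrArg (S.O k) (ha'e k h).symm) (α x k)
  have hcond : ∀ k, k ≠ j → HEq (α x k) (a' k) := by
    intro k hk
    simp only [a', dif_neg hk]
    exact (cast_heq _ _).symm
  have hns := hp.2.1 j x m (α x) a' hcond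
  rw [marg_point S p x (α x) (hα x) _ _, marg_point S p x' (α x') (hα x') _ _] at hns
  rw [if_pos (fun k _ => rfl)] at hns
  have hR : ∀ k ∈ ({j}ᶜ : Set S.I), α x' k = a' k := by
    by_contra h
    rw [if_neg h] at hns
    norm_num at hns
  have hi := hR i (by simp [hij])
  rw [hi]
  simp only [a', dif_neg hij]
  exact (cast_heq _ _).symm

lemma indep (S : Scenario) (p : Behaviour S) (hp : p ∈ PNS S)
    (α : ∀ x, OutputString S x) (hα : ∀ x b, p x b = if b = α x then 1 else 0)
    (i : S.I) :
    ∀ (n : ℕ) (x y : InputString S),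
      (Finset.univ.filter fun j => ¬ x j = y j).card ≤ n → x i = y i →
      HEq (α x i) (α y i) := by
  intro n
  induction n with
  | zero =>
    intro x y hcard _
    have hxy : x = y := by
      funext j
      by_contra hj
      have hmem : j ∈ Finset.univ.filter fun j => ¬ x j = y j := by
        simp [hj]
      have := Finset.card_pos.mpr ⟨j, hmem⟩
      omega
    subst hxy
    exact HEq.rfl
  | succ n ih =>
    intro x y hcard hxy
    by_cases hd : x = y
    · subst hd; exact HEq.rfl
    · obtain ⟨j, hj⟩ := Function.ne_iff.mp hd
      have hji : j ≠ i := by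
        rintro rfl
        exact hj hxy
      set x₂ := Function.update x j (y j) with hx₂
      have h1 : HEq (α x i) (α x₂ i) := step S p hp α hα j x (y j) i (Ne.symm hji)
      have hx₂i : x₂ i = y i := by
        rw [hx₂, Function.update_of_ne (Ne.symm hji)]
        exact hxy
      have hjold : j ∈ Finset.univ.filter fun k => ¬ x k = y k := by simp [hj]
      have hsub : (Finset.univ.filter fun k => ¬ x₂ k = y k) ⊆
          (Finset.univ.filter fun k => ¬ x k = y k).erase j := by
        intro k hk
        simp only [Finset.mem_filter, Finset.mem_univ, true_and] at hk
        have hkj : k ≠ j := by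
          rintro rfl
          exact hk (by rw [hx₂, Function.update_self])
        refine Finset.mem_erase.mpr ⟨hkj, ?_⟩
        simp only [Finset.mem_filter, Finset.mem_univ, true_and]
        rwa [hx₂, Function.update_of_ne hkj] at hk
      have hcard₂ : (Finset.univ.filter fun k => ¬ x₂ k = y k).card ≤ n := by
        have h2 := Finset.card_le_card hsub
        rw [Finset.card_erase_of_mem hjold] at h2
        omega
      exact h1.trans (ih x₂ y hcard₂ hx₂i)

lemma pns_eq_detB (S : Scenario) (p : Behaviour S) (hp : p ∈ PNS S) :
    ∃ o : Strat S, p = detB S o := by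
  choose α hα using exists_point S p hp
  classical
  let base : InputString S := fun j => Classical.arbitrary _
  refine ⟨fun i m => cast (congrArg (S.O i) (Function.update_self i m base))
      (α (Function.update base i m) i), ?_⟩
  funext x a
  rw [hα x a]
  unfold detB
  have key : ∀ i, α x i =
      cast (congrArg (S.O i) (Function.update_self i (x i) base))
        (α (Function.update base i (x i)) i) := by
    intro i
    have h1 : HEq (α x i) (α (Function.update base i (x i)) i) :=
      indep S p hp α hα i _ x (Function.update base i (x i)) le_rfl
        (Function.update_self i (x i) base).symm
    exact eq_of_heq (h1.trans (cast_heq _ _).symm)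
  have hiff : (a = α x) ↔ (∀ i, a i = cast (congrArg (S.O i)
      (Function.update_self i (x i) base)) (α (Function.update base i (x i)) i)) := by
    rw [funext_iff]
    exact forall_congr' fun i => by rw [key i]
  by_cases hC : a = α x
  · rw [if_pos hC, if_pos (hiff.mp hC)]
  · rw [if_neg hC, if_neg fun hc => hC (hiff.mpr hc)]

/-- Restriction of a strategy to a restricted scenario. -/
def restr (S : Scenario) (N : ∀ i, Set (S.M i)) (o : Strat S) : Strat (S.restrict N) :=
  fun i m => o i.1 m.1

/-- Gluing strategies on the two halves of a bipartition. -/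
def glue (S : Scenario) (M' : ∀ i, Set (S.M i))
    (o' : Strat (S.restrict M')) (o'' : Strat (S.restrict fun i => (M' i)ᶜ)) : Strat S :=
  fun i m => if h : m ∈ M' i then o' ⟨i, ⟨m, h⟩⟩ ⟨m, h⟩ else o'' ⟨i, ⟨m, h⟩⟩ ⟨m, h⟩

lemma glue_restr (S : Scenario) (M' : ∀ i, Set (S.M i)) (o : Strat S) :
    glue S M' (restr S M' o) (restr S (fun i => (M' i)ᶜ) o) = o := by
  funext i m
  unfold glue restr
  by_cases h : m ∈ M' i
  · rw [dif_pos h]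
  · rw [dif_neg h]

lemma cond_iff (S : Scenario) (N : ∀ i, Set (S.M i)) (o' : Strat (S.restrict N))
    (x : InputString S) (a : OutputString S x) (k : (S.restrict N).I)
    (h : x k.1 ∈ N k.1) :
    (o' k (extendInput S N x k) = extendOutput S N x a k) ↔ a k.1 = o' k ⟨x k.1, h⟩ := by
  have hX : extendInput S N x k = ⟨x k.1, h⟩ := by
    unfold extendInput; exact dif_pos h
  have hA : HEq (extendOutput S N x a k) (a k.1) := by
    unfold extendOutput; rw [dif_pos h]; exact cast_heq _ _
  have hO : HEq (o' k (extendInput S N x k)) (o' k (⟨x k.1, h⟩ : N k.1)) := by rw [hX]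
  constructor
  · intro hh
    exact eq_of_heq ((hA.symm.trans (heq_of_eq hh.symm)).trans hO)
  · intro hh
    exact eq_of_heq ((hO.trans (heq_of_eq hh.symm)).trans hA.symm)

lemma bprod_detB (S : Scenario) (M' : ∀ i, Set (S.M i))
    (o' : Strat (S.restrict M')) (o'' : Strat (S.restrict fun i => (M' i)ᶜ)) :
    bprod S M' (detB _ o') (detB _ o'') = detB S (glue S M' o' o'') := by
  funext x a
  unfold bprod
  rw [marg_detB, marg_detB]
  have hiff : ((∀ k ∈ {i : (S.restrict M').I | x i.1 ∈ M' i.1},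
        o' k (extendInput S M' x k) = extendOutput S M' x a k) ∧
      (∀ k ∈ {i : (S.restrict fun i => (M' i)ᶜ).I | x i.1 ∈ (M' i.1)ᶜ},
        o'' k (extendInput S (fun i => (M' i)ᶜ) x k)
          = extendOutput S (fun i => (M' i)ᶜ) x a k)) ↔
      (∀ i, a i = glue S M' o' o'' i (x i)) := by
    constructor
    · rintro ⟨h1, h2⟩ i
      unfold glue
      by_cases h : x i ∈ M' i
      · refine Eq.trans ?_ (dif_pos h).symm
        exact (cond_iff S M' o' x a ⟨i, ⟨x i, h⟩⟩ h).mp (h1 ⟨i, ⟨x i, h⟩⟩ h)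
      · refine Eq.trans ?_ (dif_neg h).symm
        exact (cond_iff S (fun i => (M' i)ᶜ) o'' x a ⟨i, ⟨x i, h⟩⟩ h).mp
          (h2 ⟨i, ⟨x i, h⟩⟩ h)
    · intro hall
      constructor
      · intro k hk
        have hk' : x k.1 ∈ M' k.1 := hk
        rw [cond_iff S M' o' x a k hk']
        have := hall k.1
        unfold glue at this
        exact this.trans (dif_pos hk')
      · intro k hk
        have hk' : ¬ x k.1 ∈ M' k.1 := hk
        rw [cond_iff S (fun i => (M' i)ᶜ) o'' x a k hk']
        have := hall k.1
        unfold glue at this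
        exact this.trans (dif_neg hk')
  unfold detB
  by_cases hC : ∀ i, a i = glue S M' o' o'' i (x i)
  · obtain ⟨h1, h2⟩ := hiff.mpr hC
    rw [if_pos h1, if_pos h2, if_pos hC, one_mul]
  · rw [if_neg hC]
    by_cases h1 : ∀ k ∈ {i : (S.restrict M').I | x i.1 ∈ M' i.1},
        o' k (extendInput S M' x k) = extendOutput S M' x a k
    · rw [if_pos h1, one_mul, if_neg fun h2 => hC (hiff.mp ⟨h1, h2⟩)]
    · rw [if_neg h1, zero_mul]

lemma marg_sum (S : Scenario) {ι : Type} (t : Finset ι) (w : ι → ℝ) (q : ι → Behaviour S)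
    (x : InputString S) (V : Set S.I) (a : OutputString S x) :
    marg S (∑ k ∈ t, w k • q k) x V a = ∑ k ∈ t, w k * marg S (q k) x V a := by
  unfold marg
  calc ∑ b : OutputString S x,
        (if ∀ i ∈ V, b i = a i then (∑ k ∈ t, w k • q k) x b else 0)
      = ∑ b : OutputString S x, ∑ k ∈ t,
          (if ∀ i ∈ V, b i = a i then w k * q k x b else 0) := by
        refine Finset.sum_congr rfl fun b _ => ?_
        simp only [Finset.sum_apply, Pi.smul_apply, smul_eq_mul]
        split
        · rfl
        · simp
    _ = ∑ k ∈ t, ∑ b : OutputString S x,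
          (if ∀ i ∈ V, b i = a i then w k * q k x b else 0) := Finset.sum_comm
    _ = ∑ k ∈ t, w k * ∑ b : OutputString S x,
          (if ∀ i ∈ V, b i = a i then q k x b else 0) := by
        refine Finset.sum_congr rfl fun k _ => ?_
        rw [Finset.mul_sum]
        exact Finset.sum_congr rfl fun b _ => by rw [mul_ite, mul_zero]

lemma bprod_combo (S : Scenario) (M' : ∀ i, Set (S.M i)) {ι κ : Type}
    (t : Finset ι) (s : Finset κ) (w : ι → ℝ) (v : κ → ℝ)
    (q : ι → Behaviour (S.restrict M')) (r : κ → Behaviour (S.restrict fun i => (M' i)ᶜ)) :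
    bprod S M' (∑ k ∈ t, w k • q k) (∑ l ∈ s, v l • r l)
      = ∑ k ∈ t, ∑ l ∈ s, (w k * v l) • bprod S M' (q k) (r l) := by
  funext x a
  show marg _ (∑ k ∈ t, w k • q k) _ _ _ * marg _ (∑ l ∈ s, v l • r l) _ _ _ = _
  rw [marg_sum, marg_sum, Finset.sum_mul_sum]
  simp only [Finset.sum_apply, Pi.smul_apply, smul_eq_mul]
  refine Finset.sum_congr rfl fun k _ => Finset.sum_congr rfl fun l _ => ?_
  show (w k * _) * (v l * _) = (w k * v l) * (_ * _)
  ring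

end BellAux
/-- For any disjoint bipartition `(S', S'^⊥)` of `S` determined by `M'`,
`conv(B(S') ⊙ B(S'^⊥)) = B(S)`. -/
theorem convexHull_bprod_bell (S : Scenario) [Nonempty S.I] (M' : ∀ i, Set (S.M i)) :
    convexHull ℝ
        (bprodSet S M' (BellSet (S.restrict M')) (BellSet (S.restrict fun i => (M' i)ᶜ)))
      = BellSet S := by
  apply Set.Subset.antisymm
  · -- conv(B(S') ⊙ B(S'')) ⊆ B(S)
    apply convexHull_min ?_ (convex_convexHull ℝ _)
    rintro p ⟨p1, hp1, p2, hp2, rfl⟩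
    rw [BellSet, convexHull_eq] at hp1 hp2
    obtain ⟨ι, t, w, z, hw0, hw1, hzs, hz⟩ := hp1
    obtain ⟨κ, s, v, u, hv0, hv1, hus, hu⟩ := hp2
    rw [← hz, ← hu, Finset.centerMass_eq_of_sum_1 _ _ hw1,
      Finset.centerMass_eq_of_sum_1 _ _ hv1, BellAux.bprod_combo]
    have hsum1 : ∑ kl ∈ t ×ˢ s, w kl.1 * v kl.2 = 1 := by
      rw [Finset.sum_product, ← Finset.sum_mul_sum, hw1, hv1, one_mul]
    have hmem := Finset.centerMass_mem_convexHull (s := PNS S) (t ×ˢ s)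
      (w := fun kl => w kl.1 * v kl.2)
      (fun kl hkl => mul_nonneg (hw0 kl.1 (Finset.mem_product.mp hkl).1)
        (hv0 kl.2 (Finset.mem_product.mp hkl).2))
      (by rw [hsum1]; norm_num)
      (z := fun kl => bprod S M' (z kl.1) (u kl.2))
      (fun kl hkl => ?_)
    · rw [Finset.centerMass_eq_of_sum_1 _ _ hsum1, Finset.sum_product] at hmem
      exact hmem
    · obtain ⟨o', ho'⟩ := BellAux.pns_eq_detB _ _ (hzs kl.1 (Finset.mem_product.mp hkl).1)
      obtain ⟨o'', ho''⟩ := BellAux.pns_eq_detB _ _ (hus kl.2 (Finset.mem_product.mp hkl).2)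
      show bprod S M' (z kl.1) (u kl.2) ∈ PNS S
      rw [ho', ho'', BellAux.bprod_detB]
      exact BellAux.detB_mem_PNS S _
  · -- B(S) ⊆ conv(B(S') ⊙ B(S''))
    apply convexHull_min ?_ (convex_convexHull ℝ _)
    intro p hp
    obtain ⟨o, rfl⟩ := BellAux.pns_eq_detB S p hp
    apply subset_convexHull
    refine ⟨BellAux.detB _ (BellAux.restr S M' o),
      subset_convexHull _ _ (BellAux.detB_mem_PNS _ _),
      BellAux.detB _ (BellAux.restr S (fun i => (M' i)ᶜ) o),
      subset_convexHull _ _ (BellAux.detB_mem_PNS _ _), ?_⟩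
    rw [BellAux.bprod_detB, BellAux.glue_restr]

end
end
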